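/- arXiv:1302.0061 — 5 statements merged into one kernel-verified Lean document; each statement's English description precedes it below -/
import Mathlib

section
/- Let p be a prime with p > 2, and let d, N be nonnegative integers. Define Δ_p(d,N) as the maximum of ∑_{j=1}^d δ(p, n_j) over all tuples (n_1,…,n_d) of nonnegative integers with ∑_{j=1}^d n_j ≤ N. Then Δ_p(d,N) ≤ N/(p−2). -/
/-- `δ(p,n) := max {d ≥ 0 : v_p(n+1) + d ≤ v_p(n+d+1)}`. -/
noncomputable def deltaPS (p n : ℕ) : ℕ :=
  sSup {d : ℕ | padicValNat p (n + 1) + d ≤ padicValNat p (n + d + 1)}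

private lemma bernoulli_nat (p : ℕ) (hp : 1 ≤ p) : ∀ d : ℕ, (p - 1) * d + 1 ≤ p ^ d := by
  intro d
  induction d with
  | zero => simp
  | succ n ih =>
    have h1 : 1 ≤ p ^ n := Nat.one_le_pow _ _ hp
    have e1 : (p - 1) * (n + 1) + 1 = ((p - 1) * n + 1) + (p - 1) := by ring
    rw [e1, pow_succ]
    have e2 : p ^ n * p = p ^ n + p ^ n * (p - 1) := by
      rw [Nat.mul_sub, Nat.mul_one]
      have e4 : p ^ n ≤ p ^ n * p := Nat.le_mul_of_pos_right _ (by omega)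
      omega
    rw [e2]
    have e3 : p ^ n * (p - 1) ≥ p - 1 := Nat.le_mul_of_pos_left _ (by omega)
    omega

private lemma key_bound (p : ℕ) (hp : p.Prime) (hp2 : 2 < p) (n : ℕ) :
    (p - 2) * deltaPS p n ≤ n := by
  set S : Set ℕ := {d : ℕ | padicValNat p (n + 1) + d ≤ padicValNat p (n + d + 1)} with hS
  have hmem : ∀ d ∈ S, (p - 2) * d ≤ n := by
    intro e he
    rcases Nat.eq_zero_or_pos e with rfl | hpos
    · simp
    · have hle : padicValNat p (n + 1) + e ≤ padicValNat p (n + e + 1) := he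
      have hdvd : p ^ (padicValNat p (n + 1) + e) ∣ (n + e + 1) :=
        dvd_trans (pow_dvd_pow p hle) (pow_padicValNat_dvd)
      have hle2 : p ^ (padicValNat p (n + 1) + e) ≤ n + e + 1 :=
        Nat.le_of_dvd (by omega) hdvd
      have hpe : p ^ e ≤ p ^ (padicValNat p (n + 1) + e) :=
        Nat.pow_le_pow_right hp.pos (by omega)
      have hb := bernoulli_nat p (by omega) e
      have : (p - 1) * e + 1 ≤ n + e + 1 := by omega
      have : (p - 1) * e = (p - 2) * e + e := by
        have : p - 1 = (p - 2) + 1 := by omega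
        rw [this]; ring
      omega
  have hne : S.Nonempty := ⟨0, by simp [hS]⟩
  have hbdd : BddAbove S := by
    refine ⟨n, fun e he => ?_⟩
    have := hmem e he
    rcases Nat.eq_zero_or_pos e with rfl | hpos
    · exact Nat.zero_le n
    · have : e ≤ (p - 2) * e := Nat.le_mul_of_pos_left _ (by omega)
      omega
  have hsup : deltaPS p n ∈ S := Nat.sSup_mem hne hbdd
  exact hmem _ hsup

/-- For a prime `p > 2` and nonnegative integers `d`, `N`, the maximum `Δ_p(d,N)` of
`∑_{j=1}^d δ(p, n_j)` over tuples of nonnegative integers `(n_1,…,n_d)` with `∑ n_j ≤ N`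
satisfies `Δ_p(d,N) ≤ N/(p−2)`; equivalently, every such tuple satisfies
`(p − 2) * ∑ δ(p, n_j) ≤ N`. -/
theorem stmt_1 (p : ℕ) (hp : p.Prime) (hp2 : 2 < p) (d N : ℕ)
    (ns : Fin d → ℕ) (hns : ∑ j, ns j ≤ N) :
    (p - 2) * ∑ j, deltaPS p (ns j) ≤ N := by
  calc (p - 2) * ∑ j, deltaPS p (ns j) = ∑ j, (p - 2) * deltaPS p (ns j) := by
        rw [Finset.mul_sum]
    _ ≤ ∑ j, ns j := Finset.sum_le_sum fun j _ => key_bound p hp hp2 (ns j)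
    _ ≤ N := hns
end

section
/- Every short exact sequence of topological abelian groups 0 → F → G → ℤ_p^g → 0 with F finite splits; equivalently, any commutative topological group extension G of ℤ_p^g by a finite abelian group F is isomorphic as a topological group to ℤ_p^g × F. -/
/-!
Multiplication by `m = |F|` kills `ker π`, so it factors as `h ∘ π` with `h : ℤ_p^g → G` a
continuous homomorphism. Write `m = p^α e` with `e` a `p`-adic unit. A lift `y` of `e⁻¹ e_j`,
multiplied by `e`, satisfies `p^α • (e • y) = h (e⁻¹ e_j)`; since every `a ∈ ℤ_p` is
`n + p^α b` with `n ∈ ℤ`, the map `a ↦ n • e • y + h (e⁻¹ b e_j)` is then a well-defined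
continuous homomorphism lifting `a ↦ a e_j`. Summing over `j` gives a continuous homomorphic
section `s` of `π`, and `(z, f) ↦ s z + i f` is the required isomorphism; its inverse is
continuous because `i` is an embedding.
-/

open Topology

theorem IsOpenQuotientMap.exists_continuous_comp_eq_nsmul {G H : Type*}
    [AddCommGroup G] [TopologicalSpace G] [ContinuousAdd G] [AddCommGroup H] [TopologicalSpace H]
    {π : G →+ H} (hπ : IsOpenQuotientMap π) {m : ℕ} (hm : ∀ x, π x = 0 → m • x = 0) :
    ∃ h : H →+ G, Continuous h ∧ ∀ x, h (π x) = m • x := by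
  let h := π.liftOfSurjective hπ.surjective ⟨m • AddMonoidHom.id G, fun x hx => hm x hx⟩
  have hcomp : ∀ x, h (π x) = m • x := π.liftOfRightInverse_comp_apply _ _ _
  refine ⟨h, hπ.isQuotientMap.continuous_iff.2 ?_, hcomp⟩
  simpa only [Function.comp_def, hcomp] using continuous_nsmul m

theorem nonempty_continuousAddEquiv_prod_of_section {F G H : Type*}
    [AddCommGroup F] [TopologicalSpace F] [AddCommGroup G] [TopologicalSpace G]
    [IsTopologicalAddGroup G] [AddCommGroup H] [TopologicalSpace H]
    {i : F →+ G} (hi : IsEmbedding i) {π : G →+ H} (hπ : Continuous π) (hexact : π.ker = i.range)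
    {s : H →+ G} (hs : Continuous s) (hπs : ∀ z, π (s z) = z) :
    Nonempty (G ≃ₜ+ H × F) := by
  have hπi : ∀ f, π (i f) = 0 := fun f => π.mem_ker.1 (hexact ▸ ⟨f, rfl⟩)
  let Φ : H × F →+ G := s.coprod i
  have hΦ : Function.Bijective Φ := by
    constructor
    · rintro ⟨z, f⟩ ⟨z', f'⟩ h
      obtain rfl : z = z' := by simpa [Φ, hπs, hπi] using congrArg π h
      simpa [Φ, hi.injective.eq_iff] using h
    · intro x
      obtain ⟨f, hf⟩ : x - s (π x) ∈ i.range := hexact ▸ by simp [hπs]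
      exact ⟨(π x, f), by simp [Φ, hf]⟩
  let E := AddEquiv.ofBijective Φ hΦ
  have hE : ∀ x, s (E.symm x).1 + i (E.symm x).2 = x := E.apply_symm_apply
  have hE₁ : ∀ x, (E.symm x).1 = π x := fun x => by
    conv_rhs => rw [← hE x]
    simp [hπs, hπi]
  have hE₂ : ∀ x, i (E.symm x).2 = x - s (π x) := fun x => by
    rw [← hE₁, eq_sub_iff_add_eq', hE]
  refine ⟨{ toAddEquiv := E.symm, continuous_toFun := ?_, continuous_invFun := ?_ }⟩
  · have h₁ : Continuous fun x => (E.symm x).1 := by simpa only [hE₁] using hπ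
    have h₂ : Continuous fun x => (E.symm x).2 :=
      hi.continuous_iff.2 <| (continuous_id.sub (hs.comp hπ)).congr fun x => (hE₂ x).symm
    exact h₁.prodMk h₂
  · exact (hs.comp continuous_fst).add (hi.continuous.comp continuous_snd)

namespace PadicInt

variable {p : ℕ} [Fact p.Prime]

theorem isUnit_natCast_of_not_dvd {e : ℕ} (he : ¬p ∣ e) : IsUnit (e : ℤ_[p]) :=
  isUnit_iff.2 (norm_natCast_eq_one_iff.2 ((Nat.Prime.coprime_iff_not_dvd Fact.out).2 he))

theorem isOpenEmbedding_pow_mul (α : ℕ) :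
    IsOpenEmbedding (fun b : ℤ_[p] => (p : ℤ_[p]) ^ α * b) := by
  have hinj : Function.Injective (fun b : ℤ_[p] => (p : ℤ_[p]) ^ α * b) :=
    mul_right_injective₀ (pow_ne_zero _ prime_p.ne_zero)
  refine ⟨((continuous_const_mul _).isClosedEmbedding hinj).isEmbedding, ?_⟩
  have hrange : Set.range (fun b : ℤ_[p] => (p : ℤ_[p]) ^ α * b) =
      Metric.closedBall 0 ((p : ℝ) ^ (-α : ℤ)) := by
    ext a
    rw [Metric.mem_closedBall, dist_zero_right, norm_le_pow_iff_mem_span_pow,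
      Ideal.mem_span_singleton, dvd_def, Set.mem_range]
    simp only [eq_comm]
  rw [hrange]
  exact IsUltrametricDist.isOpen_closedBall _ (zpow_ne_zero _ (by exact_mod_cast prime_p.ne_zero))

theorem exists_intCast_add_pow_mul (a : ℤ_[p]) (α : ℕ) :
    ∃ (n : ℤ) (b : ℤ_[p]), a = n + (p : ℤ_[p]) ^ α * b := by
  obtain ⟨b, hb⟩ := Ideal.mem_span_singleton.1 (appr_spec α a)
  exact ⟨a.appr α, b, by push_cast; linear_combination hb⟩

theorem exists_int_of_intCast_add_pow_mul_eq {α : ℕ} {n n' : ℤ} {b b' : ℤ_[p]}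
    (h : n + (p : ℤ_[p]) ^ α * b = n' + (p : ℤ_[p]) ^ α * b') :
    ∃ c : ℤ, n - n' = p ^ α * c ∧ b' - b = c := by
  have hdvd : (p : ℤ_[p]) ^ α ∣ ((n - n' : ℤ) : ℤ_[p]) :=
    ⟨b' - b, by push_cast; linear_combination h⟩
  obtain ⟨c, hc⟩ := (pow_p_dvd_int_iff α _).1 hdvd
  refine ⟨c, hc, mul_left_cancel₀ (pow_ne_zero α prime_p.ne_zero) ?_⟩
  have hc' := congrArg (Int.cast : ℤ → ℤ_[p]) hc
  push_cast at hc'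
  linear_combination hc' - h

theorem exists_continuous_pow_nsmul_eq {G : Type*} [AddCommGroup G] [TopologicalSpace G]
    [IsTopologicalAddGroup G] {ψ : ℤ_[p] →+ G} (hψ : Continuous ψ) {α : ℕ} {y : G}
    (hy : p ^ α • y = ψ 1) :
    ∃ σ : ℤ_[p] →+ G, Continuous σ ∧ ∀ a, p ^ α • σ a = ψ a := by
  choose n b hnb using fun a : ℤ_[p] => exists_intCast_add_pow_mul a α
  have hψ_int : ∀ d : ℤ, ((p : ℤ) ^ α * d) • y = ψ d := fun d => by
    rw [mul_comm, mul_smul, ← Nat.cast_pow, natCast_zsmul, hy, ← map_zsmul, zsmul_one]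
  have hindep : ∀ a (k : ℤ) c, a = k + (p : ℤ_[p]) ^ α * c → n a • y + ψ (b a) = k • y + ψ c := by
    intro a k c hkc
    obtain ⟨d, hn, hb⟩ := exists_int_of_intCast_add_pow_mul_eq ((hnb a).symm.trans hkc)
    rw [← sub_eq_zero, show n a • y + ψ (b a) - (k • y + ψ c) = (n a - k) • y - ψ (c - b a) by
      rw [map_sub, sub_smul]; abel, hn, hb, hψ_int, sub_self]
  let σ : ℤ_[p] →+ G := AddMonoidHom.mk' (fun a => n a • y + ψ (b a)) fun a a' => by
    rw [hindep (a + a') (n a + n a') (b a + b a') (by push_cast; linear_combination hnb a + hnb a'),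
      add_smul, map_add]
    abel
  have hσ_pow_mul : ∀ c, σ ((p : ℤ_[p]) ^ α * c) = ψ c := fun c => by
    show n _ • y + ψ (b _) = ψ c
    rw [hindep _ 0 c (by simp), zero_smul, zero_add]
  refine ⟨σ, continuous_of_continuousAt_zero σ ?_, fun a => ?_⟩
  · have hiff := (isOpenEmbedding_pow_mul (p := p) α).continuousAt_iff (g := σ) (x := 0)
    rw [mul_zero] at hiff
    rw [← hiff, Function.comp_def]
    simpa only [hσ_pow_mul] using hψ.continuousAt
  · show p ^ α • (n a • y + ψ (b a)) = ψ a
    conv_rhs => rw [hnb a]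
    rw [smul_add, smul_comm, hy, ← map_nsmul, ← map_zsmul, zsmul_one, ← map_add, nsmul_eq_mul,
      Nat.cast_pow]

variable {ι G : Type*} [DecidableEq ι] [AddCommGroup G] [TopologicalSpace G]
  [IsTopologicalAddGroup G] {π : G →+ (ι → ℤ_[p])}

theorem exists_continuous_lift_single (hπ : IsOpenQuotientMap π) {m : ℕ} (hm0 : m ≠ 0)
    (hm : ∀ x, π x = 0 → m • x = 0) (j : ι) :
    ∃ σ : ℤ_[p] →+ G, Continuous σ ∧ ∀ a, π (σ a) = Pi.single j a := by
  obtain ⟨α, e, hpe, rfl⟩ := Nat.exists_eq_pow_mul_and_not_dvd hm0 p (Fact.out : p.Prime).ne_one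
  obtain ⟨u, hu⟩ := isUnit_iff_exists_inv.1 (isUnit_natCast_of_not_dvd (p := p) hpe)
  obtain ⟨h, hh, hhπ⟩ := hπ.exists_continuous_comp_eq_nsmul hm
  have hπh : ∀ w, π (h w) = (p ^ α * e) • w := fun w => by
    obtain ⟨x, rfl⟩ := hπ.surjective w
    rw [hhπ, map_nsmul]
  let ψ : ℤ_[p] →+ G := h.comp ((AddMonoidHom.single _ j).comp (AddMonoidHom.mulLeft u))
  have hψ : Continuous ψ := hh.comp ((continuous_single j).comp (continuous_const_mul u))
  obtain ⟨x, hx⟩ := hπ.surjective (Pi.single j u)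
  obtain ⟨σ, hσ, hσψ⟩ := exists_continuous_pow_nsmul_eq hψ (y := e • x) (by
    rw [smul_smul, ← hhπ, hx]; simp [ψ])
  refine ⟨σ, hσ, fun a => nsmul_right_injective (pow_ne_zero α (Fact.out : p.Prime).ne_zero) ?_⟩
  calc p ^ α • π (σ a) = π (h (Pi.single j (u * a))) := by rw [← map_nsmul, hσψ]; rfl
    _ = p ^ α • Pi.single j a := by
      rw [hπh, mul_smul, ← Pi.single_smul, nsmul_eq_mul e, ← mul_assoc, hu, one_mul]

theorem exists_continuous_section [Fintype ι] (hπ : IsOpenQuotientMap π) {m : ℕ} (hm0 : m ≠ 0)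
    (hm : ∀ x, π x = 0 → m • x = 0) :
    ∃ s : (ι → ℤ_[p]) →+ G, Continuous s ∧ ∀ z, π (s z) = z := by
  choose σ hσ hπσ using exists_continuous_lift_single hπ hm0 hm
  refine ⟨∑ j, (σ j).comp (Pi.evalAddMonoidHom _ j), ?_, fun z => ?_⟩
  · exact (continuous_finsetSum Finset.univ fun j _ => (hσ j).comp (continuous_apply j)).congr
      fun z => by simp
  · simp [hπσ, Finset.univ_sum_single]

end PadicInt

theorem stmt_2_general (p : ℕ) [Fact p.Prime] (g : ℕ)
    {F G : Type*} [AddCommGroup F] [TopologicalSpace F] [Finite F]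
    [AddCommGroup G] [TopologicalSpace G] [IsTopologicalAddGroup G]
    (i : F →+ G)
    (hi_emb : Topology.IsEmbedding (i : F → G))
    (π : G →+ (Fin g → ℤ_[p])) (hπ_cont : Continuous π) (hπ_surj : Function.Surjective π)
    (hπ_open : IsOpenMap π)
    (hexact : π.ker = i.range) :
    ∃ e : G ≃ₜ ((Fin g → ℤ_[p]) × F), ∀ x y : G, e (x + y) = e x + e y := by
  have hkill : ∀ x, π x = 0 → Nat.card F • x = 0 := fun x hx => by
    obtain ⟨f, rfl⟩ : x ∈ i.range := hexact ▸ hx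
    rw [← map_nsmul, card_nsmul_eq_zero', map_zero]
  obtain ⟨s, hs, hπs⟩ := PadicInt.exists_continuous_section ⟨hπ_surj, hπ_cont, hπ_open⟩
    Nat.card_pos.ne' hkill
  obtain ⟨e⟩ := nonempty_continuousAddEquiv_prod_of_section hi_emb hπ_cont hexact hs hπs
  exact ⟨e.toHomeomorph, map_add e⟩

/-- Every short exact sequence of topological abelian groups `0 → F → G → ℤ_p^g → 0` with `F`
finite (discrete) splits: if `i : F → G` is a continuous injective homomorphism which is a
topological embedding, `π : G → ℤ_p^g` is a continuous open surjective homomorphism, and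
`ker π = im i`, then `G` is isomorphic as a topological group to `ℤ_p^g × F`. -/
theorem stmt_2 (p : ℕ) [Fact p.Prime] (g : ℕ) (hg : 1 ≤ g)
    {F G : Type*} [AddCommGroup F] [TopologicalSpace F] [DiscreteTopology F] [Finite F]
    [AddCommGroup G] [TopologicalSpace G] [IsTopologicalAddGroup G]
    (i : F →+ G) (hi_inj : Function.Injective i) (hi_cont : Continuous i)
    (hi_emb : Topology.IsEmbedding (i : F → G))
    (π : G →+ (Fin g → ℤ_[p])) (hπ_cont : Continuous π) (hπ_surj : Function.Surjective π)
    (hπ_open : IsOpenMap π)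
    (hexact : π.ker = i.range) :
    ∃ e : G ≃ₜ ((Fin g → ℤ_[p]) × F), ∀ x y : G, e (x + y) = e x + e y :=
  stmt_2_general p g i hi_emb π hπ_cont hπ_surj hπ_open hexact
end

section
/- Let w ∈ ℂ_p[[t]] be a nonzero power series with bounded coefficients whose Newton polygon attains its minimal vertex y-coordinate, and let n_w be the minimal x-coordinate of a vertex of the Newton polygon attaining this minimum. Then the number of zeros of w in the open unit disk of ℂ_p, counted with multiplicity, equals n_w. -/
/-!
After dividing by `w n_w`, all coefficients lie in the closed unit ball `𝒪` of `K`, the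
coefficient at `n_w` is `1`, and the coefficients below `n_w` lie in the principal ideal `(π)` of
`𝒪` generated by one of them of largest norm. As `𝒪` is `(π)`-adically complete, Weierstrass
preparation over `𝒪` writes the normalized series as `P * h` with `P` monic of degree `n_w`, its
lower coefficients in `(π)`, and `h` a unit of `𝒪⟦X⟧`. The ultrametric inequality puts every root
of such a `P` in the open unit disk, and `h` has no zero there because evaluation at a point of the
disk is a ring homomorphism `𝒪⟦X⟧ →+* K`.
-/

open scoped Polynomial PowerSeries
open Filter

namespace PowerSeries

variable {A : Type*} [CommRing A] {I : Ideal A}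

theorem order_map_quotient_mk_eq {g : A⟦X⟧} {n : ℕ} (hlow : ∀ i < n, coeff i g ∈ I)
    (hn : coeff n g ∉ I) : (g.map (Ideal.Quotient.mk I)).order = n := by
  rw [order_eq_nat]
  simp only [coeff_map, ne_eq, Ideal.Quotient.eq_zero_iff_mem]
  exact ⟨hn, hlow⟩

theorem isUnit_of_X_pow_eq_mul_add (hI : I ≤ (⊥ : Ideal A).jacobson) {g q : A⟦X⟧} {r : A[X]}
    {n : ℕ} (hlow : ∀ i < n, coeff i g ∈ I) (hr : r.degree < n)
    (heq : X ^ n = g * q + (r : A⟦X⟧)) : IsUnit q := by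
  -- the coefficient of `X ^ n` in `heq` reads `1 = ∑ i < n, gᵢ q_{n-i} + gₙ q₀`
  have hcoeff := congrArg (coeff n) heq
  rw [coeff_X_pow_self, map_add, Polynomial.coeff_coe, Polynomial.coeff_eq_zero_of_degree_lt hr,
    add_zero, coeff_mul,
    Finset.Nat.sum_antidiagonal_eq_sum_range_succ (fun i j ↦ coeff i g * coeff j q),
    Finset.sum_range_succ, Nat.sub_self] at hcoeff
  have hlow_sum : ∑ i ∈ Finset.range n, coeff i g * coeff (n - i) q ∈ I :=
    I.sum_mem fun i hi ↦ I.mul_mem_right _ (hlow i (Finset.mem_range.1 hi))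
  have hunit : IsUnit (coeff n g * constantCoeff q) := by
    convert Ideal.mem_jacobson_bot.1 (hI hlow_sum) (-1) using 1
    rw [← coeff_zero_eq_constantCoeff_apply]
    linear_combination -hcoeff
  exact isUnit_iff_constantCoeff.2 (isUnit_of_mul_isUnit_right hunit)

theorem exists_isWeierstrassFactorizationAt_of_coeff_mem [IsAdicComplete I A] (hI : I ≠ ⊤)
    {g : A⟦X⟧} {n : ℕ} (hlow : ∀ i < n, coeff i g ∈ I) (hn : IsUnit (coeff n g)) :
    ∃ f h, g.IsWeierstrassFactorizationAt f h I ∧ f.natDegree = n := by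
  have : Nontrivial A := ⟨0, 1, fun h ↦ hI (I.eq_top_iff_one.2 (h ▸ I.zero_mem))⟩
  have hord : (g.map (Ideal.Quotient.mk I)).order.toNat = n := by
    rw [order_map_quotient_mk_eq hlow (fun h ↦ hI (Ideal.eq_top_of_isUnit_mem _ h hn))]; rfl
  have hdiv : g.IsWeierstrassDivisorAt I := by rwa [IsWeierstrassDivisorAt, hord]
  have H := hdiv.isWeierstrassDivisionAt_div_mod (X ^ n : A⟦X⟧)
  set q := hdiv.div (X ^ n : A⟦X⟧)
  set r := hdiv.mod (X ^ n : A⟦X⟧)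
  have hr : r.degree < n := hord ▸ H.degree_lt
  have hq : IsUnit q :=
    isUnit_of_X_pow_eq_mul_add (IsAdicComplete.le_jacobson_bot I) hlow hr H.eq_mul_add
  have hr' : r.degree < (Polynomial.X ^ n : A[X]).degree := by rwa [Polynomial.degree_X_pow]
  have hdeg : (Polynomial.X ^ n - r).natDegree = n := Polynomial.natDegree_eq_of_degree_eq_some
    ((Polynomial.degree_sub_eq_left_of_degree_lt hr').trans (Polynomial.degree_X_pow n))
  have hcoe : ((Polynomial.X ^ n - r : A[X]) : A⟦X⟧) = (X : A⟦X⟧) ^ n - r := by simp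
  refine ⟨Polynomial.X ^ n - r, ↑hq.unit⁻¹, ⟨⟨⟨fun {i} hi ↦ ?_⟩,
    (Polynomial.monic_X_pow n).sub_of_left hr'⟩, Units.isUnit _, ?_⟩, hdeg⟩
  · rw [← Polynomial.coeff_coe, hcoe]
    exact H.coeff_f_sub_r_mem (hord ▸ hdeg ▸ hi)
  · rw [hcoe, H.eq_mul_add, add_sub_cancel_right, mul_assoc, IsUnit.mul_val_inv, mul_one]

end PowerSeries

theorem Polynomial.norm_lt_one_of_isRoot {K : Type*} [NormedField K] [IsUltrametricDist K]
    {P : K[X]} (hP : P.Monic) (hlow : ∀ i < P.natDegree, ‖P.coeff i‖ < 1) {α : K}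
    (hα : P.IsRoot α) : ‖α‖ < 1 := by
  by_contra! hα1
  replace hα1 : 1 ≤ ‖α‖₊ := hα1
  set d := P.natDegree
  set c : NNReal := (Finset.range d).sup fun i ↦ ‖P.coeff i‖₊
  have hc : c < 1 := (Finset.sup_lt_iff one_pos).2 fun i hi ↦ hlow i (Finset.mem_range.1 hi)
  have hpow : α ^ d = -∑ i ∈ Finset.range d, P.coeff i * α ^ i := by
    rw [IsRoot.def, eval_eq_sum_range, Finset.sum_range_succ, hP.coeff_natDegree, one_mul] at hα
    linear_combination hα
  have hle : ‖α‖₊ ^ d ≤ c * ‖α‖₊ ^ d := calc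
    ‖α‖₊ ^ d = ‖∑ i ∈ Finset.range d, P.coeff i * α ^ i‖₊ := by
      rw [← nnnorm_pow, hpow, nnnorm_neg]
    _ ≤ c * ‖α‖₊ ^ d := IsUltrametricDist.nnnorm_sum_le_of_forall_le fun i hi ↦ by
      rw [nnnorm_mul, nnnorm_pow]
      exact mul_le_mul' (Finset.le_sup (f := fun i ↦ ‖P.coeff i‖₊) hi)
        (pow_le_pow_right₀ hα1 (Finset.mem_range.1 hi).le)
  exact hle.not_gt (mul_lt_of_lt_one_left (pow_pos (one_pos.trans_le hα1) d) hc)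

def Subring.unitClosedBall (K : Type*) [NormedField K] [IsUltrametricDist K] : Subring K where
  carrier := {x | ‖x‖ ≤ 1}
  mul_mem' {x y} hx hy := by
    simpa only [Set.mem_ofPred_eq, norm_mul] using mul_le_one₀ hx (norm_nonneg y) hy
  one_mem' := by simp
  add_mem' hx hy := (IsUltrametricDist.norm_add_le_max _ _).trans (max_le hx hy)
  zero_mem' := by simp
  neg_mem' := by simp

namespace Subring.unitClosedBall

variable {K : Type*} [NormedField K] [IsUltrametricDist K]

local notation "𝒪" => Subring.unitClosedBall K

@[simp]
theorem mem_iff {x : K} : x ∈ 𝒪 ↔ ‖x‖ ≤ 1 := Iff.rfl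

theorem norm_coe_le_one (x : 𝒪) : ‖(x : K)‖ ≤ 1 := x.2

theorem isUnit_of_norm_eq_one {x : 𝒪} (hx : ‖(x : K)‖ = 1) : IsUnit x := by
  have hx0 : (x : K) ≠ 0 := norm_ne_zero_iff.1 (hx ▸ one_ne_zero)
  refine ⟨⟨x, ⟨(x : K)⁻¹, by simp [hx]⟩, Subtype.ext (mul_inv_cancel₀ hx0),
    Subtype.ext (inv_mul_cancel₀ hx0)⟩, rfl⟩

theorem dvd_iff_norm_le {a x : 𝒪} : a ∣ x ↔ ‖(x : K)‖ ≤ ‖(a : K)‖ := by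
  constructor
  · rintro ⟨c, rfl⟩
    simpa using mul_le_of_le_one_right (norm_nonneg (a : K)) (norm_coe_le_one c)
  · intro hx
    by_cases ha : (a : K) = 0
    · rw [ha, norm_zero, norm_le_zero_iff, ZeroMemClass.coe_eq_zero] at hx
      exact hx ▸ dvd_zero a
    · refine ⟨⟨(x : K) / a, ?_⟩, Subtype.ext (mul_div_cancel₀ _ ha).symm⟩
      rw [mem_iff, norm_div]
      exact div_le_one_of_le₀ hx (norm_nonneg _)

theorem mem_span_singleton_pow_iff {π x : 𝒪} {n : ℕ} :
    x ∈ Ideal.span {π} ^ n ↔ ‖(x : K)‖ ≤ ‖(π : K)‖ ^ n := by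
  rw [Ideal.span_singleton_pow, Ideal.mem_span_singleton, dvd_iff_norm_le, SubmonoidClass.coe_pow,
    norm_pow]

theorem exists_norm_lt_one_forall_norm_le (x : ℕ → 𝒪) {n : ℕ}
    (hx : ∀ m < n, ‖(x m : K)‖ < 1) :
    ∃ π : 𝒪, ‖(π : K)‖ < 1 ∧ ∀ m < n, ‖(x m : K)‖ ≤ ‖(π : K)‖ := by
  classical
  obtain ⟨π, hπs, hπmax⟩ := Finset.exists_max_image (insert 0 ((Finset.range n).image x))
    (fun a : 𝒪 ↦ ‖(a : K)‖) (Finset.insert_nonempty _ _)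
  refine ⟨π, ?_, fun m hm ↦ hπmax (x m) (Finset.mem_insert_of_mem
    (Finset.mem_image_of_mem x (Finset.mem_range.2 hm)))⟩
  rcases Finset.mem_insert.1 hπs with rfl | hπ
  · simp
  · obtain ⟨m, hm, rfl⟩ := Finset.mem_image.1 hπ
    exact hx m (Finset.mem_range.1 hm)

theorem summable_norm_coeff_mul_pow (f : 𝒪⟦X⟧) {z : K} (hz : ‖z‖ < 1) :
    Summable fun n ↦ ‖↑(PowerSeries.coeff n f) * z ^ n‖ := by
  refine (summable_geometric_of_lt_one (norm_nonneg z) hz).of_nonneg_of_le (fun _ ↦ norm_nonneg _)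
    fun n ↦ ?_
  rw [norm_mul, norm_pow]
  exact mul_le_of_le_one_left (by positivity) (norm_coe_le_one _)

variable [CompleteSpace K]

theorem isAdicComplete_span_singleton {π : 𝒪} (hπ : ‖(π : K)‖ < 1) :
    IsAdicComplete (Ideal.span {π}) 𝒪 := by
  have hpow := tendsto_pow_atTop_nhds_zero_of_lt_one (norm_nonneg (π : K)) hπ
  refine { haus' := fun x hx ↦ ?_, prec' := fun f hf ↦ ?_ }
  · simp only [SModEq.zero, smul_eq_mul, Ideal.mul_top, mem_span_singleton_pow_iff] at hx
    exact Subtype.ext (norm_le_zero_iff.1 (ge_of_tendsto' hpow hx))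
  · simp only [SModEq.sub_mem, smul_eq_mul, Ideal.mul_top, mem_span_singleton_pow_iff] at hf
    have hcauchy : CauchySeq fun k ↦ (f k : K) :=
      cauchySeq_of_le_geometric _ 1 hπ fun k ↦ by
        simpa [dist_eq_norm] using hf (Nat.le_succ k)
    obtain ⟨L, hL⟩ := cauchySeq_tendsto_of_complete hcauchy
    refine ⟨⟨L, le_of_tendsto' hL.norm fun k ↦ norm_coe_le_one (f k)⟩, fun n ↦ ?_⟩
    simp only [SModEq.sub_mem, smul_eq_mul, Ideal.mul_top, mem_span_singleton_pow_iff,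
      AddSubgroupClass.coe_sub]
    refine le_of_tendsto (tendsto_const_nhds.sub hL).norm (eventually_atTop.2 ⟨n, fun k hk ↦ ?_⟩)
    simpa using hf hk

noncomputable def evalRingHom (z : K) (hz : ‖z‖ < 1) : 𝒪⟦X⟧ →+* K where
  toFun f := ∑' n, ↑(PowerSeries.coeff n f) * z ^ n
  map_one' := by
    rw [tsum_eq_single 0 fun n hn ↦ by simp [PowerSeries.coeff_one, hn]]
    simp
  map_mul' f g := by
    rw [tsum_mul_tsum_eq_tsum_sum_antidiagonal_of_summable_norm
      (summable_norm_coeff_mul_pow f hz) (summable_norm_coeff_mul_pow g hz)]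
    refine tsum_congr fun n ↦ ?_
    rw [PowerSeries.coeff_mul]
    push_cast
    rw [Finset.sum_mul]
    refine Finset.sum_congr rfl fun p hp ↦ ?_
    rw [← Finset.HasAntidiagonal.mem_antidiagonal.1 hp, pow_add]
    ring
  map_zero' := by simp
  map_add' f g := by
    simp only [map_add, Subring.coe_add, add_mul]
    exact (summable_norm_coeff_mul_pow f hz).of_norm.tsum_add
      (summable_norm_coeff_mul_pow g hz).of_norm

theorem evalRingHom_apply (z : K) (hz : ‖z‖ < 1) (f : 𝒪⟦X⟧) :
    evalRingHom z hz f = ∑' n, ↑(PowerSeries.coeff n f) * z ^ n := rfl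

theorem evalRingHom_coe (z : K) (hz : ‖z‖ < 1) (p : 𝒪[X]) :
    evalRingHom z hz p = (p.map (Subring.unitClosedBall K).subtype).eval z := by
  rw [evalRingHom_apply, Polynomial.eval_map, Polynomial.eval₂_eq_sum_range,
    tsum_eq_sum (s := Finset.range (p.natDegree + 1)) fun n hn ↦ ?_]
  · simp
  · rw [Polynomial.coeff_coe, Polynomial.coeff_eq_zero_of_natDegree_lt, ZeroMemClass.coe_zero,
      zero_mul]
    simpa [Nat.lt_succ_iff] using hn

theorem continuousOn_tsum_coeff_mul_pow (f : 𝒪⟦X⟧) :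
    ContinuousOn (fun z : K ↦ ∑' n, ↑(PowerSeries.coeff n f) * z ^ n) (Metric.ball 0 1) := by
  refine continuousOn_of_forall_continuousAt fun z₀ hz₀ ↦ ?_
  rw [mem_ball_zero_iff] at hz₀
  obtain ⟨r, hz₀r, hr1⟩ := exists_between hz₀
  refine (continuousOn_tsum (u := fun n ↦ r ^ n) (fun n ↦ by fun_prop)
    (summable_geometric_of_lt_one ((norm_nonneg _).trans hz₀r.le) hr1) fun n z hz ↦ ?_).continuousAt
    (Metric.isOpen_ball.mem_nhds (mem_ball_zero_iff.2 hz₀r))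
  rw [norm_mul, norm_pow]
  exact (mul_le_of_le_one_left (by positivity) (norm_coe_le_one _)).trans
    (pow_le_pow_left₀ (norm_nonneg z) (mem_ball_zero_iff.1 hz).le n)

theorem exists_isUnit_eval_eq_prod_mul [IsAlgClosed K] {g : 𝒪⟦X⟧} {n : ℕ}
    (hlow : ∀ m < n, ‖((PowerSeries.coeff m g : 𝒪) : K)‖ < 1)
    (hn : ‖((PowerSeries.coeff n g : 𝒪) : K)‖ = 1) :
    ∃ (zs : Multiset K) (h : 𝒪⟦X⟧), IsUnit h ∧ Multiset.card zs = n ∧ (∀ a ∈ zs, ‖a‖ < 1) ∧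
      ∀ z (hz : ‖z‖ < 1), evalRingHom z hz g = (zs.map (z - ·)).prod * evalRingHom z hz h := by
  obtain ⟨π, hπ, hπlow⟩ := exists_norm_lt_one_forall_norm_le (PowerSeries.coeff · g) hlow
  have hmem {x : 𝒪} : x ∈ Ideal.span {π} ↔ ‖(x : K)‖ ≤ ‖(π : K)‖ := by
    simpa using mem_span_singleton_pow_iff (n := 1)
  have hI : Ideal.span {π} ≠ ⊤ := fun htop ↦
    (hmem.1 (htop ▸ Submodule.mem_top : (1 : 𝒪) ∈ Ideal.span {π})).not_gt (by simpa using hπ)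
  have := isAdicComplete_span_singleton hπ
  obtain ⟨P, h, ⟨hP, hunit, rfl⟩, hdeg⟩ :=
    PowerSeries.exists_isWeierstrassFactorizationAt_of_coeff_mem hI
      (fun m hm ↦ hmem.2 (hπlow m hm)) (isUnit_of_norm_eq_one hn)
  set Q := P.map (Subring.unitClosedBall K).subtype
  have hQ : Q.Monic := hP.monic.map _
  have hQdeg : Q.natDegree = P.natDegree :=
    Polynomial.natDegree_map_eq_of_injective Subtype.val_injective P
  have hsplits : Q.Splits := IsAlgClosed.splits Q
  refine ⟨Q.roots, h, hunit, ?_, fun a ha ↦ ?_, fun z hz ↦ ?_⟩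
  · rw [← hsplits.natDegree_eq_card_roots, hQdeg, hdeg]
  · refine Polynomial.norm_lt_one_of_isRoot hQ (fun i hi ↦ ?_) (Polynomial.isRoot_of_mem_roots ha)
    rw [Polynomial.coeff_map]
    exact (hmem.1 (hP.mem (hQdeg ▸ hi))).trans_lt hπ
  · rw [map_mul, evalRingHom_coe, hsplits.eval_eq_prod_roots_of_monic hQ]

end Subring.unitClosedBall

open Subring.unitClosedBall in
theorem stmt_4_general {K : Type*} [NormedField K] [IsUltrametricDist K] [CompleteSpace K]
    [IsAlgClosed K]
    (w : ℕ → K)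
    (nw : ℕ) (hne : w nw ≠ 0)
    (hattain : ∀ n, ‖w n‖ ≤ ‖w nw‖) (hmin : ∀ m < nw, ‖w m‖ < ‖w nw‖) :
    ∃ (zs : Multiset K) (u : K → K),
      Multiset.card zs = nw ∧ (∀ z ∈ zs, ‖z‖ < 1) ∧
      ContinuousOn u {z : K | ‖z‖ < 1} ∧ (∀ z : K, ‖z‖ < 1 → u z ≠ 0) ∧
      ∀ z : K, ‖z‖ < 1 →
        (∑' n, w n * z ^ n) = (zs.map fun a => z - a).prod * u z := by
  have hpos : 0 < ‖w nw‖ := norm_pos_iff.2 hne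
  have hnorm (n : ℕ) : ‖(w nw)⁻¹ * w n‖ = ‖w n‖ / ‖w nw‖ := by
    rw [norm_mul, norm_inv, inv_mul_eq_div]
  let g : (Subring.unitClosedBall K)⟦X⟧ := PowerSeries.mk fun n ↦
    ⟨(w nw)⁻¹ * w n, (hnorm n).trans_le ((div_le_one hpos).2 (hattain n))⟩
  obtain ⟨zs, h, hunit, hcard, hzs, heval⟩ := exists_isUnit_eval_eq_prod_mul (g := g) (n := nw)
    (fun m hm ↦ by simpa [g, hnorm, div_lt_one hpos] using hmin m hm)
    (by simp [g, hnorm, hpos.ne'])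
  refine ⟨zs, fun z ↦ w nw * ∑' n, ↑(PowerSeries.coeff n h) * z ^ n, hcard, hzs, ?_,
    fun z hz ↦ mul_ne_zero hne (hunit.map (evalRingHom z hz)).ne_zero, fun z hz ↦ ?_⟩
  · rw [← ball_zero_eq]
    exact continuousOn_const.mul (continuousOn_tsum_coeff_mul_pow h)
  · calc ∑' n, w n * z ^ n = w nw * evalRingHom z hz g := by
          rw [evalRingHom_apply, ← tsum_mul_left]
          congr 1 with n
          simp [g, ← mul_assoc, mul_inv_cancel_left₀ hne]
      _ = _ := by rw [heval z hz, evalRingHom_apply]; ring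

/-- Let `K` be a complete algebraically closed nonarchimedean normed field (e.g. `ℂ_p`), and
let `w = ∑ w_n t^n` be a nonzero power series with bounded coefficients whose Newton polygon
attains its minimal vertex `y`-coordinate; concretely, let `n_w` be the least index at which
the maximal coefficient norm (equivalently, minimal valuation) is attained.  Then `w` has
exactly `n_w` zeros, counted with multiplicity, in the open unit disk: there is a multiset of
`n_w` points of the open unit disk and a continuous nonvanishing function `u` on the disk with
`w(z) = ∏ (z − a) · u(z)` there. -/
theorem stmt_4 {K : Type*} [NormedField K] [IsUltrametricDist K] [CompleteSpace K]
    [IsAlgClosed K]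
    (w : ℕ → K) (B : ℝ) (hB : ∀ n, ‖w n‖ ≤ B)
    (nw : ℕ) (hne : w nw ≠ 0)
    (hattain : ∀ n, ‖w n‖ ≤ ‖w nw‖) (hmin : ∀ m < nw, ‖w m‖ < ‖w nw‖) :
    ∃ (zs : Multiset K) (u : K → K),
      Multiset.card zs = nw ∧ (∀ z ∈ zs, ‖z‖ < 1) ∧
      ContinuousOn u {z : K | ‖z‖ < 1} ∧ (∀ z : K, ‖z‖ < 1 → u z ≠ 0) ∧
      ∀ z : K, ‖z‖ < 1 →
        (∑' n, w n * z ^ n) = (zs.map fun a => z - a).prod * u z :=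
  stmt_4_general w nw hne hattain hmin
end

section
/- Let w_1,…,w_g ∈ ℚ_p[[t]], not all zero, and let R be the valuation ring of an unramified extension of ℚ_p. If λ_1,…,λ_g ∈ R have images in R/pR that are linearly independent over 𝔽_p, then the Newton polygon of the tuple (w_1,…,w_g) equals the Newton polygon of the single series λ_1 w_1 + ⋯ + λ_g w_g. -/
/-- The (closed region on and above the) lower convex hull of a set of points in the plane:
the Newton polygon of a set of points is encoded by this region, two Newton polygons being
equal iff the corresponding regions are equal. -/
def npRegion (S : Set (ℝ × ℝ)) : Set (ℝ × ℝ) :=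
  closure (convexHull ℝ {q : ℝ × ℝ | ∃ s ∈ S, s.1 = q.1 ∧ s.2 ≤ q.2})

/-- Let `w_1, …, w_g ∈ ℚ_p[[t]]` (given by their coefficient sequences), not all zero, and let
`R` be the valuation ring of an unramified extension `L` of `ℚ_p` (an isometric normed field
extension whose value group is still `p^ℤ`).  If `λ_1, …, λ_g ∈ R` have images in `R/pR` that
are linearly independent over `𝔽_p`, then the Newton polygon of the tuple `(w_1, …, w_g)`
(the lower convex hull of all points `(n, v_p(w_{j,n}))`) equals the Newton polygon of the
single series `λ_1 w_1 + ⋯ + λ_g w_g`; valuations are computed as `-log_p ‖·‖`. -/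
theorem stmt_5 (p : ℕ) [Fact p.Prime] (g : ℕ) (hg : 1 ≤ g)
    (w : Fin g → ℕ → ℚ_[p]) (hw : ∃ j n, w j n ≠ 0)
    {L : Type*} [NormedField L] [Algebra ℚ_[p] L]
    (hisom : ∀ x : ℚ_[p], ‖algebraMap ℚ_[p] L x‖ = ‖x‖)
    (hunram : ∀ x : L, x ≠ 0 → ∃ m : ℤ, ‖x‖ = (p : ℝ) ^ m)
    (lam : Fin g → L) (hlam : ∀ j, ‖lam j‖ ≤ 1)
    (hindep : ∀ c : Fin g → ℤ, ‖∑ j, (c j : L) * lam j‖ < 1 → ∀ j, (c j : ZMod p) = 0) :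
    npRegion {q : ℝ × ℝ | ∃ (j : Fin g) (n : ℕ), w j n ≠ 0 ∧
        q = ((n : ℝ), -Real.logb p ‖w j n‖)} =
    npRegion {q : ℝ × ℝ | ∃ n : ℕ,
        (∑ j, lam j * algebraMap ℚ_[p] L (w j n)) ≠ 0 ∧
        q = ((n : ℝ), -Real.logb p ‖∑ j, lam j * algebraMap ℚ_[p] L (w j n)‖)} := by
  have hpp : p.Prime := Fact.out
  have hp1 : (1 : ℝ) < p := by exact_mod_cast hpp.one_lt
  haveI : IsUltrametricDist L := by
    apply IsUltrametricDist.isUltrametricDist_of_forall_norm_natCast_le_one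
    intro n
    calc ‖(n : L)‖ = ‖((n : ℤ) : ℚ_[p])‖ := by
          rw [← map_natCast (algebraMap ℚ_[p] L) n, hisom]; norm_cast
      _ ≤ 1 := Padic.norm_int_le_one _
  have hne : (Finset.univ : Finset (Fin g)).Nonempty := ⟨⟨0, hg⟩, Finset.mem_univ _⟩
  have key : ∀ a : Fin g → ℚ_[p],
      ‖∑ j, lam j * algebraMap ℚ_[p] L (a j)‖
        = Finset.univ.sup' hne (fun j => ‖a j‖) := by
    intro a
    apply le_antisymm
    · apply IsUltrametricDist.norm_sum_le_of_forall_le_of_nonempty hne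
      intro j _
      calc ‖lam j * algebraMap ℚ_[p] L (a j)‖ = ‖lam j‖ * ‖a j‖ := by
            rw [norm_mul, hisom]
        _ ≤ 1 * ‖a j‖ := by gcongr; exact hlam j
        _ = ‖a j‖ := one_mul _
        _ ≤ _ := Finset.le_sup' (fun j => ‖a j‖) (Finset.mem_univ j)
    · obtain ⟨j0, -, hj0⟩ := Finset.exists_mem_eq_sup' hne (fun j => ‖a j‖)
      rw [hj0]
      by_cases h0 : a j0 = 0
      · simp [h0]
      by_contra hlt
      push_neg at hlt
      have hb : ∀ j, ‖a j / a j0‖ ≤ 1 := by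
        intro j
        rw [norm_div]
        apply div_le_one_of_le₀ _ (norm_nonneg _)
        rw [← hj0]
        exact Finset.le_sup' (fun j => ‖a j‖) (Finset.mem_univ j)
      set B : Fin g → ℤ_[p] := fun j => ⟨a j / a j0, hb j⟩ with hB
      set c : Fin g → ℕ := fun j => PadicInt.zmodRepr (B j) with hc
      have hcB : ∀ j, ∃ e : ℤ_[p], B j - (c j : ℤ_[p]) = p * e := by
        intro j
        have := PadicInt.sub_zmodRepr_mem (B j)
        rw [PadicInt.maximalIdeal_eq_span_p, Ideal.mem_span_singleton] at this
        obtain ⟨e, he⟩ := this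
        exact ⟨e, he⟩
      choose e he using hcB
      -- In ℚ_[p] : a j / a j0 = c j + p * e j
      have hq : ∀ j, a j / a j0 = (c j : ℚ_[p]) + p * (e j : ℚ_[p]) := by
        intro j
        have := congrArg (fun x : ℤ_[p] => (x : ℚ_[p])) (he j)
        push_cast at this
        linear_combination this
      -- the sum over b's has norm < 1
      have hsumb : ‖∑ j, lam j * algebraMap ℚ_[p] L (a j / a j0)‖ < 1 := by
        have hfact : ∑ j, lam j * algebraMap ℚ_[p] L (a j)
            = algebraMap ℚ_[p] L (a j0) * ∑ j, lam j * algebraMap ℚ_[p] L (a j / a j0) := by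
          rw [Finset.mul_sum]
          refine Finset.sum_congr rfl fun j _ => ?_
          rw [← mul_assoc, mul_comm (algebraMap ℚ_[p] L (a j0)) (lam j), mul_assoc, ← map_mul]
          rw [mul_div_cancel₀ _ h0]
        have hnorm : ‖∑ j, lam j * algebraMap ℚ_[p] L (a j)‖
            = ‖a j0‖ * ‖∑ j, lam j * algebraMap ℚ_[p] L (a j / a j0)‖ := by
          rw [hfact, norm_mul, hisom]
        have hpos : (0:ℝ) < ‖a j0‖ := norm_pos_iff.mpr h0
        rw [hnorm] at hlt
        calc ‖∑ j, lam j * algebraMap ℚ_[p] L (a j / a j0)‖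
            = ‖a j0‖ * ‖∑ j, lam j * algebraMap ℚ_[p] L (a j / a j0)‖ / ‖a j0‖ := by
              field_simp
          _ < ‖a j0‖ / ‖a j0‖ := by apply div_lt_div_of_pos_right ?_ hpos; exact hlt
          _ = 1 := div_self hpos.ne'
      -- rewrite the sum
      have hsplit : ∑ j, lam j * algebraMap ℚ_[p] L (a j / a j0)
          = (∑ j, ((c j : ℤ) : L) * lam j) + (p : L) * ∑ j, lam j * algebraMap ℚ_[p] L (e j : ℚ_[p]) := by
        rw [Finset.mul_sum, ← Finset.sum_add_distrib]
        refine Finset.sum_congr rfl fun j _ => ?_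
        rw [hq j, map_add, map_mul, map_natCast, map_natCast]
        push_cast
        ring
      have hT : ‖∑ j, lam j * algebraMap ℚ_[p] L (e j : ℚ_[p])‖ ≤ 1 := by
        apply IsUltrametricDist.norm_sum_le_of_forall_le_of_nonneg zero_le_one
        intro j _
        rw [norm_mul, hisom]
        calc ‖lam j‖ * ‖((e j : ℤ_[p]) : ℚ_[p])‖ ≤ 1 * 1 := by
              apply mul_le_mul (hlam j) (PadicInt.norm_le_one _) (norm_nonneg _) zero_le_one
          _ = 1 := one_mul 1
      have hpL : ‖(p : L)‖ < 1 := by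
        rw [← map_natCast (algebraMap ℚ_[p] L) p, hisom, Padic.norm_p]
        exact inv_lt_one_of_one_lt₀ hp1
      have hcsum : ‖∑ j, (((c j : ℤ) : L)) * lam j‖ < 1 := by
        have h1 : ∑ j, (((c j : ℤ) : L)) * lam j
            = (∑ j, lam j * algebraMap ℚ_[p] L (a j / a j0))
              - (p : L) * ∑ j, lam j * algebraMap ℚ_[p] L (e j : ℚ_[p]) := by
          rw [hsplit]; ring
        rw [h1]
        have hmax := IsUltrametricDist.norm_add_le_max
          ((∑ j, lam j * algebraMap ℚ_[p] L (a j / a j0)))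
          (-((p : L) * ∑ j, lam j * algebraMap ℚ_[p] L (e j : ℚ_[p])))
        rw [← sub_eq_add_neg, norm_neg] at hmax
        apply lt_of_le_of_lt hmax
        apply max_lt hsumb
        calc ‖(p : L) * ∑ j, lam j * algebraMap ℚ_[p] L (e j : ℚ_[p])‖
            = ‖(p:L)‖ * ‖∑ j, lam j * algebraMap ℚ_[p] L (e j : ℚ_[p])‖ := norm_mul _ _
          _ ≤ ‖(p:L)‖ * 1 := by
              apply mul_le_mul_of_nonneg_left hT (norm_nonneg _)
          _ = ‖(p:L)‖ := mul_one _
          _ < 1 := hpL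
      have hzero := hindep (fun j => (c j : ℤ)) hcsum
      -- derive contradiction at j0
      have hBj0 : B j0 = 1 := by
        apply Subtype.ext
        show a j0 / a j0 = ((1 : ℤ_[p]) : ℚ_[p])
        rw [div_self h0]; norm_cast
      have htz := congrArg (PadicInt.toZMod (p := p)) (he j0)
      rw [hBj0, map_sub, map_one, map_natCast, map_mul, map_natCast, ZMod.natCast_self,
        zero_mul] at htz
      have hc0 : ((c j0 : ℤ) : ZMod p) = 0 := hzero j0
      push_cast at hc0
      rw [hc0, sub_zero] at htz
      haveI : Fact (1 < p) := ⟨hpp.one_lt⟩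
      exact one_ne_zero htz
  -- main set equality
  have hset : {q : ℝ × ℝ | ∃ s ∈ {q : ℝ × ℝ | ∃ (j : Fin g) (n : ℕ), w j n ≠ 0 ∧
        q = ((n : ℝ), -Real.logb p ‖w j n‖)}, s.1 = q.1 ∧ s.2 ≤ q.2}
      = {q : ℝ × ℝ | ∃ s ∈ {q : ℝ × ℝ | ∃ n : ℕ,
        (∑ j, lam j * algebraMap ℚ_[p] L (w j n)) ≠ 0 ∧
        q = ((n : ℝ), -Real.logb p ‖∑ j, lam j * algebraMap ℚ_[p] L (w j n)‖)},
        s.1 = q.1 ∧ s.2 ≤ q.2} := by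
    ext q
    simp only [Set.mem_setOf_eq]
    constructor
    · rintro ⟨s, ⟨j, n, hjn, rfl⟩, h1, h2⟩
      have hk := key (fun j => w j n)
      have hle : ‖w j n‖ ≤ ‖∑ j, lam j * algebraMap ℚ_[p] L (w j n)‖ := by
        rw [hk]; exact Finset.le_sup' (fun j => ‖w j n‖) (Finset.mem_univ j)
      have hpos : (0:ℝ) < ‖w j n‖ := norm_pos_iff.mpr hjn
      have hWne : (∑ j, lam j * algebraMap ℚ_[p] L (w j n)) ≠ 0 :=
        norm_pos_iff.mp (lt_of_lt_of_le hpos hle)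
      refine ⟨((n : ℝ), -Real.logb p ‖∑ j, lam j * algebraMap ℚ_[p] L (w j n)‖),
        ⟨n, hWne, rfl⟩, h1, ?_⟩
      have hlog : Real.logb p ‖w j n‖ ≤ Real.logb p ‖∑ j, lam j * algebraMap ℚ_[p] L (w j n)‖ :=
        Real.logb_le_logb_of_le hp1 hpos hle
      have h2' : -Real.logb p ‖w j n‖ ≤ q.2 := h2
      simp only
      linarith
    · rintro ⟨s, ⟨n, hn, rfl⟩, h1, h2⟩
      have hk := key (fun j => w j n)
      obtain ⟨j, -, hj⟩ := Finset.exists_mem_eq_sup' hne (fun j => ‖w j n‖)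
      have hjW : ‖∑ j, lam j * algebraMap ℚ_[p] L (w j n)‖ = ‖w j n‖ := hk.trans hj
      have hjne : w j n ≠ 0 := by
        apply norm_pos_iff.mp
        rw [← hjW]
        exact norm_pos_iff.mpr hn
      refine ⟨((n : ℝ), -Real.logb p ‖w j n‖), ⟨j, n, hjne, rfl⟩, h1, ?_⟩
      have h2' : -Real.logb p ‖∑ j, lam j * algebraMap ℚ_[p] L (w j n)‖ ≤ q.2 := h2
      simp only
      rw [← hjW]
      exact h2'
  unfold npRegion
  rw [hset]
end

section
/- Let g ≥ 1 and p a prime, and for g > n ≥ 1 define the morphism φ: ℙ^1_{ℚ_p} → ℙ^{g−1}_{ℚ_p} given on ℙ^1 by the polynomials f_j(t) = p^{j(j−1)} t^{j−1} for 1 ≤ j ≤ n+1 and f_j = 0 for n+1 < j ≤ g. Then the image of φ(ℙ^1(ℚ_p)) under the reduction map to ℙ^{g−1}(𝔽_p) has cardinality exactly np + 1. -/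
open LinearAlgebra.Projectivization

/-!
For `x z ≠ 0` the `i`-th coordinate of `φ(x : z)` (`i ≤ n`) has valuation
`i² + (1 + v(x) - v(z)) i + const`, a monic quadratic in `i`. After scaling to a primitive vector,
the coordinates that survive reduction are those where this quadratic vanishes, i.e. attains its
minimum, which happens at one index or at two consecutive ones. So every reduced point lies on one
of the lines `⟨e_j, e_{j+1}⟩`, `j < n`, and all of these points are attained: `(1 : p^{2j+1})`
reduces to `e_j`, and `(ã : p^{2j+2})` with `ã` a unit lifting `a` reduces to `e_j + a e_{j+1}`.
The `n` lines of `p + 1` points each, meeting only consecutively, contain `np + 1` points.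
-/

/-- The image in `ℙ^{g−1}(𝔽_p)` of `φ(ℙ¹(ℚ_p))` under the reduction map, for the morphism `φ`
given by degree-`n` homogenizations of the polynomials `f j` (cf. the reduction of a point of
projective space over `ℚ_p`: rescale the value vector to a primitive `ℤ_p`-vector and reduce
mod `p`). -/
def redImage (p : ℕ) [Fact p.Prime] (g n : ℕ) (f : Fin g → Polynomial ℚ_[p]) :
    Set (ℙ (ZMod p) (Fin g → ZMod p)) :=
  {q | ∃ x z : ℚ_[p], ¬(x = 0 ∧ z = 0) ∧
    ∃ u : Fin g → ℤ_[p], (∃ i, ‖u i‖ = 1) ∧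
      (∃ c : ℚ_[p], ∀ i, (u i : ℚ_[p]) =
        c * ∑ k ∈ Finset.range (n + 1), (f i).coeff k * x ^ k * z ^ (n - k)) ∧
      ∃ hu : (fun i => PadicInt.toZMod (u i)) ≠ (0 : Fin g → ZMod p),
        q = Projectivization.mk (ZMod p) (fun i => PadicInt.toZMod (u i)) hu}

lemma Int.eq_add_one_of_quadratic_zeros {b d i k : ℤ} (hik : i < k)
    (hi : i ^ 2 + b * i + d = 0) (hk : k ^ 2 + b * k + d = 0)
    (hnext : 0 ≤ (i + 1) ^ 2 + b * (i + 1) + d) : k = i + 1 := by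
  -- with zeros `i` and `k` the quadratic is `(X - i) * (X - k)`, which is `i + 1 - k` at `i + 1`
  have hb : b = -(i + k) := by
    have : (k - i) * (k + i + b) = 0 := by linear_combination hk - hi
    linarith [(mul_eq_zero.mp this).resolve_left (sub_ne_zero.mpr hik.ne')]
  have : (i + 1) ^ 2 + b * (i + 1) + d = i + 1 - k := by
    subst hb; linear_combination hi
  omega

namespace PadicInt

variable {p : ℕ} [Fact p.Prime]

lemma toZMod_ne_zero_iff_isUnit (x : ℤ_[p]) : toZMod x ≠ 0 ↔ IsUnit x := by
  rw [ne_eq, ← RingHom.mem_ker, ker_toZMod, IsLocalRing.mem_maximalIdeal, mem_nonunits_iff,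
    not_not]

lemma isUnit_iff_valuation_eq_zero {x : ℤ_[p]} (hx : x ≠ 0) :
    IsUnit x ↔ (x : ℚ_[p]).valuation = 0 := by
  have hp : (1 : ℝ) < p := mod_cast (Fact.out : p.Prime).one_lt
  rw [isUnit_iff, norm_eq_zpow_neg_valuation hx, zpow_eq_one_iff_right₀ (by positivity) hp.ne',
    valuation_coe, neg_eq_zero]

end PadicInt

namespace Projectivization

variable {K : Type*} [Field K] {g n : ℕ}

def chainVec (g j : ℕ) (a : K) : Fin g → K :=
  fun i => if (i : ℕ) = j then 1 else if (i : ℕ) = j + 1 then a else 0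

lemma chainVec_ne_zero {j : ℕ} (hj : j < g) (a : K) : chainVec g j a ≠ 0 := fun h => by
  simpa [chainVec] using congrFun h ⟨j, hj⟩

lemma eq_of_smul_chainVec_eq {j j' : ℕ} {a a' s : K} (hj : j < g) (hj' : j' < g)
    (h : s • chainVec g j' a' = chainVec g j a) : j = j' ∧ (j + 1 < g → a = a') := by
  have hjj' := congrFun h ⟨j, hj⟩
  have hj'j := congrFun h ⟨j', hj'⟩
  simp only [Pi.smul_apply, smul_eq_mul, chainVec] at hjj' hj'j
  obtain rfl : j = j' := by
    by_contra hne
    split_ifs at hjj' hj'j <;> first | omega | simp_all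
  refine ⟨rfl, fun hj1 => ?_⟩
  have hs : s = 1 := by simpa using hjj'
  simpa [chainVec, hs] using (congrFun h ⟨j + 1, hj1⟩).symm

variable (K) in
def chainPoint (hgn : n < g) : Option (Fin n × K) → ℙ K (Fin g → K)
  | some (j, a) => mk K (chainVec g j a) (chainVec_ne_zero (j.2.trans hgn) a)
  | none => mk K (chainVec g n 0) (chainVec_ne_zero hgn 0)

lemma chainPoint_injective (hgn : n < g) : Function.Injective (chainPoint K hgn) := by
  rintro (_ | ⟨j, a⟩) (_ | ⟨j', a'⟩) h <;>
    obtain ⟨s, hs⟩ := (mk_eq_mk_iff' K _ _ _ _).mp h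
  · rfl
  · exact absurd (eq_of_smul_chainVec_eq hgn (j'.2.trans hgn) hs).1 j'.2.ne'
  · exact absurd (eq_of_smul_chainVec_eq (j.2.trans hgn) hgn hs).1 j.2.ne
  · obtain ⟨hjj', haa'⟩ := eq_of_smul_chainVec_eq (j.2.trans hgn) (j'.2.trans hgn) hs
    rw [Fin.ext hjj', haa' (by omega)]

lemma ncard_range_chainPoint [Fintype K] (hgn : n < g) :
    (Set.range (chainPoint K hgn)).ncard = n * Fintype.card K + 1 := by
  rw [Set.ncard_range_of_injective (chainPoint_injective hgn), Nat.card_eq_fintype_card,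
    Fintype.card_option, Fintype.card_prod, Fintype.card_fin]

lemma smul_chainVec_eq {r : Fin g → K} {j : Fin g} {a : K}
    (hsupp : ∀ i, r i ≠ 0 → i = j ∨ (i : ℕ) = j + 1)
    (hnext : ∀ i : Fin g, (i : ℕ) = j + 1 → r i = r j * a) : r j • chainVec g j a = r := by
  funext i
  simp only [Pi.smul_apply, smul_eq_mul, chainVec]
  split_ifs with hij hij1
  · rw [Fin.ext hij, mul_one]
  · exact (hnext i hij1).symm
  · by_contra hne
    rcases hsupp i (Ne.symm (by simpa using hne)) with h | h
    · exact hij (congrArg Fin.val h)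
    · exact hij1 h

lemma mk_mem_range_chainPoint (hgn : n < g) {r : Fin g → K} (hr : r ≠ 0)
    (hvanish : ∀ i : Fin g, n < i → r i = 0)
    (hconsec : ∀ i k : Fin g, r i ≠ 0 → r k ≠ 0 → i < k → (k : ℕ) = i + 1) :
    mk K r hr ∈ Set.range (chainPoint K hgn) := by
  obtain ⟨j, hj, hjmin⟩ := wellFounded_lt.has_min {i | r i ≠ 0} (Function.ne_iff.mp hr)
  have hsupp : ∀ i, r i ≠ 0 → i = j ∨ (i : ℕ) = j + 1 := fun i hi =>
    (eq_or_lt_of_le (not_lt.mp (hjmin i hi))).imp Eq.symm (hconsec j i hj hi)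
  have hjn : (j : ℕ) ≤ n := not_lt.mp fun h => hj (hvanish j h)
  rcases hjn.lt_or_eq with hjn | rfl
  · refine ⟨some (⟨j, hjn⟩, r ⟨j + 1, by omega⟩ / r j),
      ((mk_eq_mk_iff' K _ _ _ _).mpr ⟨r j, smul_chainVec_eq hsupp fun i hi => ?_⟩).symm⟩
    rw [show i = ⟨j + 1, by omega⟩ from Fin.ext hi, mul_div_cancel₀ _ hj]
  · refine ⟨none,
      ((mk_eq_mk_iff' K _ _ _ _).mpr ⟨r j, smul_chainVec_eq hsupp fun i hi => ?_⟩).symm⟩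
    rw [mul_zero, hvanish i (by omega)]

end Projectivization

open Projectivization PadicInt

namespace RedImage

variable {p : ℕ} [Fact p.Prime] {g n : ℕ}

variable (p) in
noncomputable def chainPoly (g n : ℕ) : Fin g → Polynomial ℚ_[p] := fun i =>
  if (i : ℕ) ≤ n then
    Polynomial.C ((p : ℚ_[p]) ^ (((i : ℕ) + 1) * (i : ℕ))) * Polynomial.X ^ (i : ℕ)
  else 0

lemma homogenize_chainPoly_eval (x z : ℚ_[p]) (i : Fin g) :
    ∑ k ∈ Finset.range (n + 1), (chainPoly p g n i).coeff k * x ^ k * z ^ (n - k) =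
      if (i : ℕ) ≤ n then (p : ℚ_[p]) ^ (((i : ℕ) + 1) * i) * x ^ (i : ℕ) * z ^ (n - i)
      else 0 := by
  unfold chainPoly
  split_ifs with hi
  · simp only [Polynomial.coeff_C_mul_X_pow, ite_mul, zero_mul, Finset.sum_ite_eq',
      Finset.mem_range, if_pos (Nat.lt_succ_of_le hi)]
  · simp

lemma valuation_mul_chainPoly_eval {x z c : ℚ_[p]} (hx : x ≠ 0) (hz : z ≠ 0) (hc : c ≠ 0) {m : ℕ}
    (hm : m ≤ n) :
    (c * ((p : ℚ_[p]) ^ ((m + 1) * m) * x ^ m * z ^ (n - m))).valuation =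
      m ^ 2 + (1 + x.valuation - z.valuation) * m + (c.valuation + n * z.valuation) := by
  have hp : (p : ℚ_[p]) ≠ 0 := Nat.cast_ne_zero.mpr (Fact.out : p.Prime).ne_zero
  rw [Padic.valuation_mul hc (by simp [hp, hx, hz]),
    Padic.valuation_mul (by simp [hp, hx]) (by simp [hz]),
    Padic.valuation_mul (by simp [hp]) (by simp [hx]), Padic.valuation_pow, Padic.valuation_pow,
    Padic.valuation_pow, Padic.valuation_p]
  push_cast [Nat.cast_sub hm]
  ring

lemma toZMod_support_consecutive {x z c : ℚ_[p]} {u : Fin g → ℤ_[p]}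
    (hu : ∀ i : Fin g, (i : ℕ) ≤ n →
      (u i : ℚ_[p]) = c * ((p : ℚ_[p]) ^ (((i : ℕ) + 1) * i) * x ^ (i : ℕ) * z ^ (n - i)))
    {i k : Fin g} (hi : toZMod (u i) ≠ 0) (hk : toZMod (u k) ≠ 0) (hik : i < k)
    (hkn : (k : ℕ) ≤ n) : (k : ℕ) = i + 1 := by
  have hik' : (i : ℕ) < k := hik
  have hne : ∀ m, toZMod (u m) ≠ 0 → (u m : ℚ_[p]) ≠ 0 := fun m hm h0 =>
    hm (by rw [PadicInt.coe_eq_zero.mp h0, map_zero])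
  have hui := hne i hi
  have huk := hne k hk
  rw [hu i (by omega)] at hui
  rw [hu k hkn] at huk
  have hc : c ≠ 0 := left_ne_zero_of_mul hui
  have hx : x ≠ 0 := (pow_ne_zero_iff (by omega)).mp
    (right_ne_zero_of_mul (left_ne_zero_of_mul (right_ne_zero_of_mul huk)))
  have hz : z ≠ 0 :=
    (pow_ne_zero_iff (by omega)).mp (right_ne_zero_of_mul (right_ne_zero_of_mul hui))
  have hval : ∀ m : Fin g, (m : ℕ) ≤ n → (u m : ℚ_[p]).valuation =
      (m : ℤ) ^ 2 + (1 + x.valuation - z.valuation) * m + (c.valuation + n * z.valuation) :=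
    fun m hm => by rw [hu m hm, valuation_mul_chainPoly_eval hx hz hc hm]
  have hzero : ∀ m, toZMod (u m) ≠ 0 → (u m : ℚ_[p]).valuation = 0 := fun m hm =>
    (isUnit_iff_valuation_eq_zero (PadicInt.coe_ne_zero.mp (hne m hm))).mp
      ((toZMod_ne_zero_iff_isUnit _).mp hm)
  have hnext := PadicInt.valuation_coe_nonneg (x := u ⟨i + 1, by omega⟩)
  rw [hval _ (by simp only; omega)] at hnext
  have := Int.eq_add_one_of_quadratic_zeros (by exact_mod_cast hik')
    (hval i (by omega) ▸ hzero i hi) (hval k hkn ▸ hzero k hk) (by push_cast at hnext; exact hnext)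
  omega

lemma redImage_chainPoly_subset (hgn : n < g) :
    redImage p g n (chainPoly p g n) ⊆ Set.range (chainPoint (ZMod p) hgn) := by
  rintro _ ⟨x, z, -, u, -, ⟨c, hc⟩, hr, rfl⟩
  simp only [homogenize_chainPoly_eval] at hc
  have hvanish : ∀ i : Fin g, n < i → u i = 0 := fun i hi =>
    PadicInt.coe_eq_zero.mp (by rw [hc i, if_neg hi.not_ge, mul_zero])
  refine mk_mem_range_chainPoint hgn hr (fun i hi => by simp [hvanish i hi])
    fun i k hi hk hik => toZMod_support_consecutive (fun m hm => by rw [hc m, if_pos hm])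
      hi hk hik (not_lt.mp fun h => hk (by simp [hvanish k h]))

lemma mk_mem_redImage_chainPoly (w : ℤ_[p]) (Z : ℕ) (C : ℤ) (e : ℕ → ℕ)
    (he : ∀ m ≤ n, (e m : ℤ) = C + (m + 1) * m + Z * (n - m)) {v : Fin g → ZMod p} (hv : v ≠ 0)
    {s : ZMod p} (hs : s ≠ 0)
    (hsv : s • v = fun i : Fin g => if (i : ℕ) ≤ n ∧ e i = 0 then toZMod w ^ (i : ℕ) else 0) :
    mk (ZMod p) v hv ∈ redImage p g n (chainPoly p g n) := by
  -- by `he`, `u` is `p ^ C` times the value of `φ` at `(w : p ^ Z)`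
  have hp : (p : ℚ_[p]) ≠ 0 := Nat.cast_ne_zero.mpr (Fact.out : p.Prime).ne_zero
  set u : Fin g → ℤ_[p] := fun i => if (i : ℕ) ≤ n then (p : ℤ_[p]) ^ e i * w ^ (i : ℕ) else 0
  have hred : (fun i => toZMod (u i)) = s • v := by
    rw [hsv]
    funext i
    by_cases hi : (i : ℕ) ≤ n <;> simp [u, hi, zero_pow_eq, ite_mul]
  have hr : (fun i => toZMod (u i)) ≠ 0 := hred ▸ smul_ne_zero hs hv
  obtain ⟨i₀, hi₀⟩ := Function.ne_iff.mp hr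
  refine ⟨w, p ^ Z, fun h => pow_ne_zero Z hp h.2, u,
    ⟨i₀, isUnit_iff.mp ((toZMod_ne_zero_iff_isUnit _).mp hi₀)⟩, ⟨p ^ C, fun i => ?_⟩, hr,
    ((mk_eq_mk_iff' _ _ _ _ _).mpr ⟨s, hred.symm⟩).symm⟩
  rw [homogenize_chainPoly_eval]
  by_cases hi : (i : ℕ) ≤ n
  · have hpow : (p : ℚ_[p]) ^ e i =
        p ^ C * ((p : ℚ_[p]) ^ (((i : ℕ) + 1) * i) * ((p : ℚ_[p]) ^ Z) ^ (n - i)) := by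
      rw [← pow_mul, ← pow_add, ← zpow_natCast, ← zpow_natCast _ (_ + _), ← zpow_add₀ hp,
        he i hi]
      push_cast [Nat.cast_sub hi]
      ring_nf
    simp only [u, if_pos hi, PadicInt.coe_mul, PadicInt.coe_pow, PadicInt.coe_natCast, hpow]
    ring
  · simp [u, hi]

lemma chainVec_zero_mem_redImage {j : ℕ} (hjn : j ≤ n) (hjg : j < g) :
    mk (ZMod p) (chainVec g j 0) (chainVec_ne_zero hjg 0) ∈
      redImage p g n (chainPoly p g n) := by
  refine mk_mem_redImage_chainPoly 1 (2 * j + 1) (j ^ 2 - (2 * j + 1) * n)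
    (fun m => ((m : ℤ) - j).natAbs ^ 2) (fun m hm => ?_) _ one_ne_zero ?_
  · push_cast [Int.natAbs_sq, sq_abs]
    ring
  · funext i
    simp only [one_smul, chainVec, map_one, one_pow, pow_eq_zero_iff two_ne_zero,
      Int.natAbs_eq_zero, sub_eq_zero, Nat.cast_inj]
    split_ifs <;> first | rfl | omega

lemma chainVec_mem_redImage {j : ℕ} (hjn : j < n) (hjg : j < g) {a : ZMod p} (ha : a ≠ 0) :
    mk (ZMod p) (chainVec g j a) (chainVec_ne_zero hjg a) ∈
      redImage p g n (chainPoly p g n) := by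
  refine mk_mem_redImage_chainPoly (a.val : ℤ_[p]) (2 * j + 2) (j ^ 2 + j - (2 * j + 2) * n)
    (fun m => (((m : ℤ) - j) * ((m : ℤ) - j - 1)).natAbs) (fun m hm => ?_) _
    (pow_ne_zero j ha) ?_
  · rw [Int.natAbs_of_nonneg]
    · push_cast; ring
    · rcases le_or_gt ((m : ℤ) - j) 0 with h | h <;> nlinarith
  · funext i
    simp only [Pi.smul_apply, smul_eq_mul, chainVec, map_natCast, ZMod.natCast_zmod_val,
      Int.natAbs_eq_zero, mul_eq_zero, sub_eq_zero]
    split_ifs <;> first | omega | simp_all [pow_succ]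

lemma redImage_chainPoly_eq_range (hgn : n < g) :
    redImage p g n (chainPoly p g n) = Set.range (chainPoint (ZMod p) hgn) := by
  refine (redImage_chainPoly_subset hgn).antisymm ?_
  rintro _ ⟨_ | ⟨j, a⟩, rfl⟩
  · exact chainVec_zero_mem_redImage le_rfl hgn
  · obtain rfl | ha := eq_or_ne a 0
    · exact chainVec_zero_mem_redImage j.2.le (j.2.trans hgn)
    · exact chainVec_mem_redImage j.2 (j.2.trans hgn) ha

end RedImage

theorem stmt_7_general (p : ℕ) [Fact p.Prime] (g n : ℕ) (hgn : n < g) :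
    (redImage p g n (fun i : Fin g =>
        if (i : ℕ) ≤ n then
          Polynomial.C ((p : ℚ_[p]) ^ (((i : ℕ) + 1) * (i : ℕ))) * Polynomial.X ^ (i : ℕ)
        else 0)).Finite ∧
    (redImage p g n (fun i : Fin g =>
        if (i : ℕ) ≤ n then
          Polynomial.C ((p : ℚ_[p]) ^ (((i : ℕ) + 1) * (i : ℕ))) * Polynomial.X ^ (i : ℕ)
        else 0)).ncard = n * p + 1 := by
  change (redImage p g n (RedImage.chainPoly p g n)).Finite ∧
    (redImage p g n (RedImage.chainPoly p g n)).ncard = n * p + 1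
  rw [RedImage.redImage_chainPoly_eq_range hgn]
  exact ⟨Set.finite_range _, by rw [ncard_range_chainPoint, ZMod.card]⟩

/-- Sharpness of the bound `np + 1`: for `g > n ≥ 1` and the morphism
`φ : ℙ¹_{ℚ_p} → ℙ^{g−1}_{ℚ_p}` defined by `f_j(t) = p^{j(j−1)} t^{j−1}` for `1 ≤ j ≤ n+1` and
`f_j = 0` for `n+1 < j ≤ g` (here indexed by `i = j − 1`), the image of `φ(ℙ¹(ℚ_p))` under the
reduction map to `ℙ^{g−1}(𝔽_p)` has cardinality exactly `np + 1`. -/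
theorem stmt_7 (p : ℕ) [Fact p.Prime] (g n : ℕ) (hn : 1 ≤ n) (hgn : n < g) :
    (redImage p g n (fun i : Fin g =>
        if (i : ℕ) ≤ n then
          Polynomial.C ((p : ℚ_[p]) ^ (((i : ℕ) + 1) * (i : ℕ))) * Polynomial.X ^ (i : ℕ)
        else 0)).Finite ∧
    (redImage p g n (fun i : Fin g =>
        if (i : ℕ) ≤ n then
          Polynomial.C ((p : ℚ_[p]) ^ (((i : ℕ) + 1) * (i : ℕ))) * Polynomial.X ^ (i : ℕ)
        else 0)).ncard = n * p + 1 :=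
  stmt_7_general p g n hgn
end
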